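/- Let K be a field and let α be an element of the Brauer group Br(K). If for every prime number ℓ dividing the period of α and for every finite field extension K'/K, the restriction α_{K'} of period ℓ has index dividing ℓ², then (by induction on the period) the index of α divides the square of its period: ind(α) | per(α)². -/

import Mathlib

/-!
Induction on the period. If `ℓ` is a prime dividing `n = per β`, the class `(n / ℓ) • β` has
period `ℓ`, hence index dividing `ℓ²`; over a splitting field `L'` of it of degree equal to
that index, the restriction of `β` has period dividing `n / ℓ`, so by induction its index
divides `(n / ℓ)²`, and `ind β ∣ [L' : L] · ind β_{L'}` gives `ind β ∣ n²`.
-/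

section PeriodIndex

variable {F : Type} {Br : F → Type} [∀ L, AddCommGroup (Br L)] {Ext : F → ℕ → F → Prop}
  {res : ∀ {L : F} {d : ℕ} {L' : F}, Ext L d L' → Br L →+ Br L'} {ind : ∀ L : F, Br L → ℕ}

theorem exists_ind_dvd_sq_mul_ind_res
    (hindres : ∀ {L : F} {d : ℕ} {L' : F} (h : Ext L d L') (α : Br L),
      ind L α ∣ d * ind L' (res h α))
    (hsplit : ∀ (L : F) (α : Br L), ∃ (L' : F) (h : Ext L (ind L α) L'), res h α = 0)
    (hmain : ∀ (L : F) (β : Br L) (ℓ : ℕ), ℓ.Prime → addOrderOf β = ℓ → ind L β ∣ ℓ ^ 2)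
    {L : F} (β : Br L) (hβ : addOrderOf β ≠ 0) {ℓ : ℕ} (hℓ : ℓ.Prime) (hℓβ : ℓ ∣ addOrderOf β) :
    ∃ (L' : F) (d : ℕ) (h : Ext L d L'),
      addOrderOf (res h β) ∣ addOrderOf β / ℓ ∧ ind L β ∣ ℓ ^ 2 * ind L' (res h β) := by
  set γ := (addOrderOf β / ℓ) • β
  have hquot : addOrderOf β / ℓ ≠ 0 :=
    (Nat.div_pos (Nat.le_of_dvd (Nat.pos_of_ne_zero hβ) hℓβ) hℓ.pos).ne'
  have hγ_ord : addOrderOf γ = ℓ := by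
    rw [addOrderOf_nsmul_of_dvd hquot (Nat.div_dvd_of_dvd hℓβ), Nat.div_div_self hℓβ hβ]
  have hγ : ind L γ ∣ ℓ ^ 2 := hmain L γ ℓ hℓ hγ_ord
  obtain ⟨L', h, hγ_split⟩ := hsplit L γ
  refine ⟨L', _, h, ?_, (hindres h β).trans (mul_dvd_mul_right hγ _)⟩
  rw [addOrderOf_dvd_iff_nsmul_eq_zero, ← map_nsmul, hγ_split]

theorem ind_dvd_addOrderOf_sq
    (hord : ∀ (L : F) (α : Br L), 0 < addOrderOf α)
    (hind0 : ∀ L : F, ind L (0 : Br L) = 1)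
    (hindres : ∀ {L : F} {d : ℕ} {L' : F} (h : Ext L d L') (α : Br L),
      ind L α ∣ d * ind L' (res h α))
    (hsplit : ∀ (L : F) (α : Br L), ∃ (L' : F) (h : Ext L (ind L α) L'), res h α = 0)
    (hmain : ∀ (L : F) (β : Br L) (ℓ : ℕ), ℓ.Prime → addOrderOf β = ℓ → ind L β ∣ ℓ ^ 2)
    {L : F} (β : Br L) : ind L β ∣ addOrderOf β ^ 2 := by
  suffices H : ∀ n (L : F) (β : Br L), addOrderOf β = n → ind L β ∣ n ^ 2 from H _ L β rfl
  intro n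
  induction n using Nat.strong_induction_on with
  | _ n IH =>
    intro L β hβ
    obtain rfl | hn1 := eq_or_ne n 1
    · rw [AddMonoid.addOrderOf_eq_one_iff.mp hβ, hind0, one_pow]
    have hn : 0 < n := hβ ▸ hord L β
    obtain ⟨ℓ, hℓ, hℓn⟩ := Nat.exists_prime_and_dvd hn1
    obtain ⟨L', d, h, hres, hdvd⟩ :=
      exists_ind_dvd_sq_mul_ind_res (Br := Br) hindres hsplit hmain β (hord L β).ne' hℓ (hβ ▸ hℓn)
    rw [hβ] at hres
    have hlt : addOrderOf (res h β) < n := calc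
      _ ≤ n / ℓ := Nat.le_of_dvd (Nat.div_pos (Nat.le_of_dvd hn hℓn) hℓ.pos) hres
      _ < n := Nat.div_lt_self hn hℓ.one_lt
    calc ind L β ∣ ℓ ^ 2 * ind L' (res h β) := hdvd
      _ ∣ ℓ ^ 2 * (n / ℓ) ^ 2 :=
        mul_dvd_mul_left _ ((IH _ hlt L' _ rfl).trans (pow_dvd_pow_of_dvd hres 2))
      _ = n ^ 2 := by rw [← mul_pow, Nat.mul_div_cancel' hℓn]

end PeriodIndex

theorem stmt_0_general
    (F : Type) (Br : F → Type) [∀ L, AddCommGroup (Br L)]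
    (Ext : F → ℕ → F → Prop)
    (res : ∀ {L : F} {d : ℕ} {L' : F}, Ext L d L' → Br L →+ Br L')
    (ind : ∀ L : F, Br L → ℕ)
    (hord : ∀ (L : F) (α : Br L), 0 < addOrderOf α)
    (hind0 : ∀ L : F, ind L (0 : Br L) = 1)
    (hindres : ∀ {L : F} {d : ℕ} {L' : F} (h : Ext L d L') (α : Br L),
      ind L α ∣ d * ind L' (res h α))
    (hsplit : ∀ (L : F) (α : Br L), ∃ (L' : F) (h : Ext L (ind L α) L'), res h α = 0)
    (hmain : ∀ (L : F) (β : Br L) (ℓ : ℕ), ℓ.Prime → addOrderOf β = ℓ → ind L β ∣ ℓ ^ 2)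
    (K : F) (α : Br K) :
    ind K α ∣ (addOrderOf α) ^ 2 :=
  ind_dvd_addOrderOf_sq hord hind0 hindres hsplit hmain α

theorem stmt_0
    (F : Type) (Br : F → Type) [∀ L, AddCommGroup (Br L)]
    (Ext : F → ℕ → F → Prop)
    (res : ∀ {L : F} {d : ℕ} {L' : F}, Ext L d L' → Br L →+ Br L')
    (ind : ∀ L : F, Br L → ℕ)
    (hord : ∀ (L : F) (α : Br L), 0 < addOrderOf α)
    (hind0 : ∀ L : F, ind L (0 : Br L) = 1)
    (htrans : ∀ {L : F} {d : ℕ} {L' : F} {e : ℕ} {L'' : F},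
      Ext L d L' → Ext L' e L'' → Ext L (d * e) L'')
    (hindres : ∀ {L : F} {d : ℕ} {L' : F} (h : Ext L d L') (α : Br L),
      ind L α ∣ d * ind L' (res h α))
    (hsplit : ∀ (L : F) (α : Br L), ∃ (L' : F) (h : Ext L (ind L α) L'), res h α = 0)
    (hkill : ∀ {L : F} {d : ℕ} {L' : F} (h : Ext L d L') (α : Br L),
      res h α = 0 → ind L α ∣ d)
    (hmain : ∀ (L : F) (β : Br L) (ℓ : ℕ), ℓ.Prime → addOrderOf β = ℓ → ind L β ∣ ℓ ^ 2)
    (K : F) (α : Br K) :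
    ind K α ∣ (addOrderOf α) ^ 2 :=
  stmt_0_general F Br Ext res ind hord hind0 hindres hsplit hmain K α
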